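/- arXiv:0709.3997 — 2 statements merged into one kernel-verified Lean document; each statement's English description precedes it below -/
import Mathlib

section
/- The set of symmetric real 2×2 matrices with determinant 1 and negative trace equals the set of matrices of the form −exp(A) with A a symmetric traceless real 2×2 matrix: {g ∈ M₂(ℝ) : gᵀ = g, det g = 1, Tr g < 0} = {−exp(A) : A ∈ M₂(ℝ), Aᵀ = A, Tr A = 0}. -/
/-!
By the spectral theorem, `exp` maps Hermitian matrices onto positive definite ones: a positive
definite `g = U diag(μ) U*` is `exp (U diag(log μ) U*)`. Since `det (exp A) = exp (tr A)` for
Hermitian `A`, the traceless ones go exactly to determinant one. A real symmetric `2 × 2` matrix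
with determinant `1` and negative trace is minus such a matrix, because its two eigenvalues have
product `1` and negative sum.
-/

open Matrix
open scoped ComplexOrder

lemma RCLike.ofReal_exp_eq_exp {𝕜 : Type*} [RCLike 𝕜] (x : ℝ) :
    ((Real.exp x : ℝ) : 𝕜) = NormedSpace.exp (x : 𝕜) := by
  rw [Real.exp_eq_exp_ℝ, ← RCLike.algebraMap_eq_ofReal, NormedSpace.algebraMap_exp_comm]

namespace Matrix

variable {n 𝕜 : Type*} [RCLike 𝕜] [Fintype n] [DecidableEq n]

namespace IsHermitian

variable {A : Matrix n n 𝕜} (hA : A.IsHermitian)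
include hA

lemma cfc_id : hA.cfc id = A := hA.spectral_theorem.symm

lemma cfc_congr {f g : ℝ → ℝ} (hfg : ∀ i, f (hA.eigenvalues i) = g (hA.eigenvalues i)) :
    hA.cfc f = hA.cfc g := by
  simp only [IsHermitian.cfc, Function.comp_def, hfg]

lemma isHermitian_cfc (f : ℝ → ℝ) : (hA.cfc f).IsHermitian :=
  hA.cfc_eq f ▸ cfc_predicate f A

lemma det_cfc (f : ℝ → ℝ) : (hA.cfc f).det = ∏ i, (f (hA.eigenvalues i) : 𝕜) := by
  rw [IsHermitian.cfc, Unitary.conjStarAlgAut_apply, det_mul_comm, ← mul_assoc,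
    Unitary.coe_star_mul_self, one_mul, det_diagonal]
  rfl

lemma trace_cfc (f : ℝ → ℝ) : (hA.cfc f).trace = ∑ i, (f (hA.eigenvalues i) : 𝕜) := by
  rw [IsHermitian.cfc, Unitary.conjStarAlgAut_apply, trace_mul_comm, ← mul_assoc,
    Unitary.coe_star_mul_self, one_mul, trace_diagonal]
  rfl

lemma posDef_cfc {f : ℝ → ℝ} (hf : ∀ i, 0 < f (hA.eigenvalues i)) : (hA.cfc f).PosDef := by
  rw [IsHermitian.cfc, Unitary.conjStarAlgAut_apply,
    IsUnit.posDef_star_right_conjugate_iff Unitary.isUnit_coe, posDef_diagonal_iff]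
  simpa using hf

lemma exp_cfc (f : ℝ → ℝ) : NormedSpace.exp (hA.cfc f) = hA.cfc (Real.exp ∘ f) := by
  have hconj := exp_units_conj (Unitary.toUnits hA.eigenvectorUnitary)
    (diagonal (RCLike.ofReal ∘ f ∘ hA.eigenvalues))
  simp only [Unitary.val_toUnits_apply, Unitary.val_inv_toUnits_apply, ← Unitary.star_eq_inv,
    Unitary.coe_star] at hconj
  rw [IsHermitian.cfc, IsHermitian.cfc, Unitary.conjStarAlgAut_apply,
    Unitary.conjStarAlgAut_apply, hconj, exp_diagonal]
  congr 3
  funext i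
  simp [RCLike.ofReal_exp_eq_exp]

lemma exp_eq_cfc : NormedSpace.exp A = hA.cfc Real.exp := by
  simpa [cfc_id] using hA.exp_cfc id

lemma posDef_exp : (NormedSpace.exp A).PosDef :=
  hA.exp_eq_cfc ▸ hA.posDef_cfc fun _ => Real.exp_pos _

lemma det_exp : (NormedSpace.exp A).det = NormedSpace.exp A.trace := by
  rw [hA.exp_eq_cfc, det_cfc, hA.trace_eq_sum_eigenvalues, NormedSpace.exp_sum]
  simp only [RCLike.ofReal_exp_eq_exp]

end IsHermitian

namespace PosDef

variable {g : Matrix n n 𝕜} (hg : g.PosDef)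
include hg

lemma exp_cfc_log : NormedSpace.exp (hg.1.cfc Real.log) = g := by
  rw [hg.1.exp_cfc, hg.1.cfc_congr (g := id) fun i => Real.exp_log (hg.eigenvalues_pos i),
    hg.1.cfc_id]

lemma trace_cfc_log_eq_zero (hdet : g.det = 1) : (hg.1.cfc Real.log).trace = 0 := by
  rw [hg.1.det_eq_prod_eigenvalues, ← RCLike.ofReal_prod, ← RCLike.ofReal_one,
    RCLike.ofReal_inj] at hdet
  rw [hg.1.trace_cfc, ← RCLike.ofReal_sum,
    ← Real.log_prod fun i _ => (hg.eigenvalues_pos i).ne', hdet, Real.log_one, RCLike.ofReal_zero]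

end PosDef

theorem exp_image_isHermitian_trace_eq_zero :
    NormedSpace.exp '' {A : Matrix n n 𝕜 | A.IsHermitian ∧ A.trace = 0}
      = {g | g.PosDef ∧ g.det = 1} := by
  ext g
  constructor
  · rintro ⟨A, ⟨hA, htr⟩, rfl⟩
    exact ⟨hA.posDef_exp, by rw [hA.det_exp, htr, NormedSpace.exp_zero]⟩
  · rintro ⟨hg, hdet⟩
    exact ⟨hg.1.cfc Real.log, ⟨hg.1.isHermitian_cfc _, hg.trace_cfc_log_eq_zero hdet⟩,
      hg.exp_cfc_log⟩

lemma IsHermitian.posDef_of_trace_pos_of_det_pos {g : Matrix (Fin 2) (Fin 2) ℝ}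
    (hg : g.IsHermitian) (htr : 0 < g.trace) (hdet : 0 < g.det) : g.PosDef := by
  rw [hg.trace_eq_sum_eigenvalues, Fin.sum_univ_two] at htr
  rw [hg.det_eq_prod_eigenvalues, Fin.prod_univ_two] at hdet
  simp only [RCLike.ofReal_real_eq_id, id] at htr hdet
  rw [hg.posDef_iff_eigenvalues_pos, Fin.forall_fin_two]
  constructor <;> nlinarith

lemma neg_posDef_and_det_eq_one_iff (g : Matrix (Fin 2) (Fin 2) ℝ) :
    (-g).PosDef ∧ (-g).det = 1 ↔ gᵀ = g ∧ g.det = 1 ∧ g.trace < 0 := by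
  have hdet_neg : (-g).det = g.det := by simp [det_neg]
  have hsymm : (-g).IsHermitian ↔ gᵀ = g := by
    rw [isHermitian_iff_isSymm]
    unfold IsSymm
    rw [transpose_neg, neg_inj]
  rw [hdet_neg, ← hsymm]
  constructor
  · rintro ⟨hpos, hdet⟩
    exact ⟨hpos.1, hdet, by simpa using hpos.trace_pos⟩
  · rintro ⟨hherm, hdet, htr⟩
    have hdet_pos : 0 < (-g).det := by rw [hdet_neg, hdet]; exact one_pos
    exact ⟨hherm.posDef_of_trace_pos_of_det_pos (by simpa using htr) hdet_pos, hdet⟩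

end Matrix

/-- The set of symmetric real 2×2 matrices with determinant 1 and negative trace equals
the set of matrices of the form `-exp A` with `A` a symmetric traceless real 2×2 matrix. -/
theorem symm_det_one_neg_trace_eq_neg_exp_image :
    {g : Matrix (Fin 2) (Fin 2) ℝ | gᵀ = g ∧ g.det = 1 ∧ g.trace < 0}
      = (fun A => -NormedSpace.exp A) ''
        {A : Matrix (Fin 2) (Fin 2) ℝ | Aᵀ = A ∧ A.trace = 0} := by
  calc {g : Matrix (Fin 2) (Fin 2) ℝ | gᵀ = g ∧ g.det = 1 ∧ g.trace < 0}
      = -{h | h.PosDef ∧ h.det = 1} := by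
        ext g; exact (neg_posDef_and_det_eq_one_iff g).symm
    _ = -(NormedSpace.exp '' {A | A.IsHermitian ∧ A.trace = 0}) := by
        rw [exp_image_isHermitian_trace_eq_zero]
    _ = _ := by
        rw [← Set.image_neg_eq_neg, Set.image_image]
        simp [IsSymm]
end

section
/- For all θ, c, t ∈ ℝ one has the matrix identity exp(t(cos θ·q1 + sin θ·q2 + c·h))·exp(−t·c·h) = [[K1·cos(ct/2)+K2·(cos(θ+ct/2)+c·sin(ct/2)), K1·sin(ct/2)+K2·(sin(θ+ct/2)−c·cos(ct/2))], [−K1·sin(ct/2)+K2·(sin(θ+ct/2)+c·cos(ct/2)), K1·cos(ct/2)+K2·(−cos(θ+ct/2)+c·sin(ct/2))]], where K1 = cosh(√(1−c²)·t/2) if c² ≤ 1 and K1 = cos(√(c²−1)·t/2) if c² > 1, and K2 = sinh(√(1−c²)·t/2)/√(1−c²) if c² < 1, K2 = t/2 if c² = 1, and K2 = sin(√(c²−1)·t/2)/√(c²−1) if c² > 1. -/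
/-! If `N * N = d • 1` for a real scalar `d`, the exponential series of `s • N` splits into its
even and odd parts, `exp (s • N) = C • 1 + S • N`, where `C` and `S` are the power series of
`cosh`/`sinh`, `cos`/`sin` or `1`/`s` according as `d` is positive, negative or zero. Here
`2 (cos θ q1 + sin θ q2 + c h)` squares to `(1 - c²) • 1` and `h` squares to `-1/4`, so both
exponentials are of this form, `exp (s h)` being a rotation by `s/2`; multiplying the two
closed forms gives the formula. -/

open Matrix Real

noncomputable def q1 : Matrix (Fin 2) (Fin 2) ℝ := (1/2 : ℝ) • !![1, 0; 0, -1]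
noncomputable def q2 : Matrix (Fin 2) (Fin 2) ℝ := (1/2 : ℝ) • !![0, 1; 1, 0]
noncomputable def h : Matrix (Fin 2) (Fin 2) ℝ := (1/2 : ℝ) • !![0, -1; 1, 0]

open NormedSpace
open scoped Nat

theorem NormedSpace.exp_smul_eq_of_mul_self_eq_smul_one {𝔸 : Type*} [NormedRing 𝔸]
    [NormedAlgebra ℝ 𝔸] [CompleteSpace 𝔸] {N : 𝔸} {d : ℝ} (hN : N * N = d • 1)
    (s : ℝ) {C S : ℝ} (hC : HasSum (fun k : ℕ => s ^ (2 * k) * d ^ k / (2 * k)!) C)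
    (hS : HasSum (fun k : ℕ => s ^ (2 * k + 1) * d ^ k / (2 * k + 1)!) S) :
    exp (s • N) = C • 1 + S • N := by
  have hpow (k : ℕ) : N ^ (2 * k) = d ^ k • 1 := by rw [pow_mul, sq, hN, smul_pow, one_pow]
  refine (exp_series_hasSum_exp' (𝕂 := ℝ) (s • N)).unique (HasSum.even_add_odd ?_ ?_)
  · convert hC.smul_const (1 : 𝔸) using 2 with k
    rw [smul_pow, hpow, smul_smul, smul_smul]
    congr 1
    ring
  · convert hS.smul_const N using 2 with k
    rw [smul_pow, pow_succ N, hpow, smul_mul_assoc, one_mul, smul_smul, smul_smul]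
    congr 1
    ring

namespace Matrix

variable {n : Type*} [Fintype n] [DecidableEq n] {N : Matrix n n ℝ}

theorem exp_smul_eq_of_mul_self_eq_smul_one {d : ℝ} (hN : N * N = d • 1) (s : ℝ)
    {C S : ℝ} (hC : HasSum (fun k : ℕ => s ^ (2 * k) * d ^ k / (2 * k)!) C)
    (hS : HasSum (fun k : ℕ => s ^ (2 * k + 1) * d ^ k / (2 * k + 1)!) S) :
    exp (s • N) = C • 1 + S • N := by
  -- `exp` sees only the topology, so any algebra norm on matrices will do.
  let : NormedRing (Matrix n n ℝ) := Matrix.linftyOpNormedRing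
  let : NormedAlgebra ℝ (Matrix n n ℝ) := Matrix.linftyOpNormedAlgebra
  exact NormedSpace.exp_smul_eq_of_mul_self_eq_smul_one hN s hC hS

theorem exp_smul_eq_cosh_of_mul_self_eq_sq {μ : ℝ} (hμ : μ ≠ 0) (hN : N * N = μ ^ 2 • 1)
    (s : ℝ) : exp (s • N) = cosh (μ * s) • 1 + (sinh (μ * s) / μ) • N := by
  refine exp_smul_eq_of_mul_self_eq_smul_one hN s ?_ ?_
  · exact (hasSum_cosh (μ * s)).congr_fun fun k => by ring
  · refine ((hasSum_sinh (μ * s)).div_const μ).congr_fun fun k => ?_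
    field_simp
    ring

theorem exp_smul_eq_cos_of_mul_self_eq_neg_sq {μ : ℝ} (hμ : μ ≠ 0)
    (hN : N * N = (-μ ^ 2) • 1) (s : ℝ) :
    exp (s • N) = cos (μ * s) • 1 + (sin (μ * s) / μ) • N := by
  refine exp_smul_eq_of_mul_self_eq_smul_one hN s ?_ ?_
  · exact (hasSum_cos (μ * s)).congr_fun fun k => by rw [neg_pow]; ring
  · refine ((hasSum_sin (μ * s)).div_const μ).congr_fun fun k => ?_
    rw [neg_pow]
    field_simp
    ring

theorem exp_smul_eq_of_mul_self_eq_zero (hN : N * N = 0) (s : ℝ) :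
    exp (s • N) = 1 + s • N := by
  rw [← zero_smul ℝ (1 : Matrix n n ℝ)] at hN
  convert exp_smul_eq_of_mul_self_eq_smul_one hN s (hasSum_single 0 fun k hk => by simp [hk])
    (hasSum_single 0 fun k hk => by simp [hk]) using 2 <;> simp

end Matrix

noncomputable def geodesicGenerator (θ c : ℝ) : Matrix (Fin 2) (Fin 2) ℝ :=
  !![cos θ, sin θ - c; sin θ + c, -cos θ]

theorem smul_eq_half_smul_geodesicGenerator (θ c t : ℝ) :
    t • (cos θ • q1 + sin θ • q2 + c • h) = (t / 2) • geodesicGenerator θ c := by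
  ext i j
  fin_cases i <;> fin_cases j <;> simp [q1, q2, h, geodesicGenerator] <;> ring

theorem geodesicGenerator_mul_self (θ c : ℝ) :
    geodesicGenerator θ c * geodesicGenerator θ c = (1 - c ^ 2) • 1 := by
  ext i j
  fin_cases i <;> fin_cases j <;> simp [geodesicGenerator, mul_apply, Fin.sum_univ_two]
  · linear_combination sin_sq_add_cos_sq θ
  · ring
  · ring
  · linear_combination sin_sq_add_cos_sq θ

theorem h_mul_self : h * h = (-(1 / 2 : ℝ) ^ 2) • 1 := by
  ext i j
  fin_cases i <;> fin_cases j <;> simp [h, mul_apply, Fin.sum_univ_two] <;> norm_num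

theorem exp_smul_h (s : ℝ) :
    exp (s • h) = !![cos (s / 2), -sin (s / 2); sin (s / 2), cos (s / 2)] := by
  rw [exp_smul_eq_cos_of_mul_self_eq_neg_sq (by norm_num) h_mul_self]
  ext i j
  fin_cases i <;> fin_cases j <;> simp [h] <;> ring_nf

theorem exp_half_smul_geodesicGenerator (θ c t : ℝ) :
    exp ((t / 2) • geodesicGenerator θ c) =
      (if c ^ 2 ≤ 1 then cosh (√(1 - c ^ 2) * t / 2) else cos (√(c ^ 2 - 1) * t / 2)) • 1 +
      (if c ^ 2 < 1 then sinh (√(1 - c ^ 2) * t / 2) / √(1 - c ^ 2)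
        else if c ^ 2 = 1 then t / 2
        else sin (√(c ^ 2 - 1) * t / 2) / √(c ^ 2 - 1)) • geodesicGenerator θ c := by
  have hG := geodesicGenerator_mul_self θ c
  simp only [mul_div_assoc]
  rcases lt_trichotomy (c ^ 2) 1 with hc | hc | hc
  · have hμ : √(1 - c ^ 2) ≠ 0 := (sqrt_pos.2 (sub_pos.2 hc)).ne'
    rw [if_pos hc.le, if_pos hc, exp_smul_eq_cosh_of_mul_self_eq_sq hμ]
    rwa [sq_sqrt (sub_pos.2 hc).le]
  · have h0 : 1 - c ^ 2 = 0 := by rw [hc, sub_self]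
    rw [if_pos hc.le, if_neg hc.not_lt, if_pos hc, h0, Real.sqrt_zero, zero_mul, cosh_zero,
      one_smul, ← exp_smul_eq_of_mul_self_eq_zero]
    rwa [h0, zero_smul] at hG
  · have hμ : √(c ^ 2 - 1) ≠ 0 := (sqrt_pos.2 (sub_pos.2 hc)).ne'
    rw [if_neg hc.not_ge, if_neg hc.not_gt, if_neg hc.ne',
      exp_smul_eq_cos_of_mul_self_eq_neg_sq hμ]
    rwa [sq_sqrt (sub_pos.2 hc).le, neg_sub]

theorem add_smul_geodesicGenerator_mul_rotation (θ c a b x : ℝ) :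
    (a • 1 + b • geodesicGenerator θ c) * !![cos x, sin x; -sin x, cos x] =
      !![a * cos x + b * (cos (θ + x) + c * sin x), a * sin x + b * (sin (θ + x) - c * cos x);
        -a * sin x + b * (sin (θ + x) + c * cos x),
        a * cos x + b * (-cos (θ + x) + c * sin x)] := by
  ext i j
  fin_cases i <;> fin_cases j <;>
    simp [geodesicGenerator, mul_apply, Fin.sum_univ_two, one_apply, cos_add, sin_add] <;> ring

/-- Explicit expression of the geodesics of the `k ⊕ p` problem on `SL(2)`. -/
theorem sl2_geodesic_formula (θ c t : ℝ) :
    NormedSpace.exp (t • (Real.cos θ • q1 + Real.sin θ • q2 + c • h))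
        * NormedSpace.exp ((-(t * c)) • h) =
      let K1 : ℝ :=
        if c ^ 2 ≤ 1 then Real.cosh (Real.sqrt (1 - c ^ 2) * t / 2)
        else Real.cos (Real.sqrt (c ^ 2 - 1) * t / 2)
      let K2 : ℝ :=
        if c ^ 2 < 1 then Real.sinh (Real.sqrt (1 - c ^ 2) * t / 2) / Real.sqrt (1 - c ^ 2)
        else if c ^ 2 = 1 then t / 2
        else Real.sin (Real.sqrt (c ^ 2 - 1) * t / 2) / Real.sqrt (c ^ 2 - 1)
      !![K1 * Real.cos (c * t / 2)
           + K2 * (Real.cos (θ + c * t / 2) + c * Real.sin (c * t / 2)),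
         K1 * Real.sin (c * t / 2)
           + K2 * (Real.sin (θ + c * t / 2) - c * Real.cos (c * t / 2));
         -K1 * Real.sin (c * t / 2)
           + K2 * (Real.sin (θ + c * t / 2) + c * Real.cos (c * t / 2)),
         K1 * Real.cos (c * t / 2)
           + K2 * (-Real.cos (θ + c * t / 2) + c * Real.sin (c * t / 2))] := by
  have hrot : -(t * c) / 2 = -(c * t / 2) := by ring
  rw [smul_eq_half_smul_geodesicGenerator, exp_half_smul_geodesicGenerator, exp_smul_h, hrot,
    cos_neg, sin_neg, neg_neg, add_smul_geodesicGenerator_mul_rotation]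
end
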